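/- arXiv:2205.03965 — 3 statements merged into one kernel-verified Lean document; each statement's English description precedes it below -/
import Mathlib

section
/- For every positive integer n there exists a connected graph G with exactly ⌊(5n−1)/2⌋ edges such that G → (nK₂, P₃). Concretely: if n is even, the graph obtained from n/2 disjoint copies of the 4-cycle C₄ by adding n/2 − 1 edges to make it connected has this property; if n is odd, the graph obtained from (n−1)/2 disjoint copies of C₄ together with one copy of P₃ by adding (n−1)/2 edges to make it connected has this property. -/
open SimpleGraph

/-- `G` contains a copy of `H`, i.e. there is an injective graph homomorphism from `H` to `G`. -/
def ContainsCopy {V W : Type*} (G : SimpleGraph V) (H : SimpleGraph W) : Prop :=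
  ∃ f : H →g G, Function.Injective f

/-- `G` arrows `(G₁, G₂)`: for every red/blue colouring of the edges of `G`
(given by a subgraph `R ≤ G` of red edges, the blue edges being `G \ R`),
there is a red copy of `G₁` or a blue copy of `G₂`. -/
def Arrows {V V₁ V₂ : Type*} (G : SimpleGraph V) (G₁ : SimpleGraph V₁) (G₂ : SimpleGraph V₂) :
    Prop :=
  ∀ R : SimpleGraph V, R ≤ G → ContainsCopy R G₁ ∨ ContainsCopy (G \ R) G₂

/-- The matching `nK₂` with `n` edges. -/
def Matching (n : ℕ) : SimpleGraph (Fin n × Fin 2) where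
  Adj a b := a.1 = b.1 ∧ a.2 ≠ b.2
  symm := by constructor; intro a b h; exact ⟨h.1.symm, h.2.symm⟩
  loopless := by constructor; intro a h; exact h.2 rfl

/-- `n` disjoint copies of the graph `H`. -/
def Copies (n : ℕ) {W : Type*} (H : SimpleGraph W) : SimpleGraph (Fin n × W) where
  Adj a b := a.1 = b.1 ∧ H.Adj a.2 b.2
  symm := by constructor; intro a b h; exact ⟨h.1.symm, h.2.symm⟩
  loopless := by constructor; intro a h; exact H.loopless.irrefl _ h.2

/-- Disjoint union of two graphs. -/
def DisjUnion {V W : Type*} (G : SimpleGraph V) (H : SimpleGraph W) : SimpleGraph (V ⊕ W) where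
  Adj a b :=
    match a, b with
    | Sum.inl x, Sum.inl y => G.Adj x y
    | Sum.inr x, Sum.inr y => H.Adj x y
    | _, _ => False
  symm := by
    constructor
    rintro (x | x) (y | y) h
    · exact G.symm.symm _ _ h
    · exact h.elim
    · exact h.elim
    · exact H.symm.symm _ _ h
  loopless := by
    constructor
    rintro (x | x) h
    · exact G.loopless.irrefl _ h
    · exact H.loopless.irrefl _ h

/-!
If the blue graph contains no `P₃`, its edges are pairwise disjoint. Hence every `C₄` has one of
its two perfect matchings entirely red and every `P₃` has a red edge, so disjoint copies of `C₄`
and `P₃` yield a red matching with two edges per `C₄` and one per `P₃`. Arrowing passes to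
supergraphs, so the edges added for connectivity play no role. For the existence part, a witness
for `n + 2` comes from one for `n` by attaching a new `C₄` through one bridging edge, which adds
five edges.
-/

section

variable {V W U : Type*}

lemma ContainsCopy.map {G : SimpleGraph V} {G' : SimpleGraph W} {H : SimpleGraph U}
    (h : ContainsCopy G H) (φ : G →g G') (hφ : Function.Injective φ) : ContainsCopy G' H :=
  let ⟨f, hf⟩ := h
  ⟨φ.comp f, hφ.comp hf⟩

lemma matching_adj_zero_one {n : ℕ} (j : Fin n) : (Matching n).Adj (j, 0) (j, 1) :=
  ⟨rfl, zero_ne_one⟩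

lemma containsCopy_matching_of_injective {ι : Type*} [Fintype ι] {n : ℕ}
    (hι : Fintype.card ι = n) {R : SimpleGraph V} (g : ι × Fin 2 → V)
    (hg : Function.Injective g) (hadj : ∀ j, R.Adj (g (j, 0)) (g (j, 1))) :
    ContainsCopy R (Matching n) := by
  let e : Fin n ≃ ι := (Fintype.equivFinOfCardEq hι).symm
  refine ⟨⟨fun p => g (e p.1, p.2), ?_⟩, hg.comp (e.injective.prodMap Function.injective_id)⟩
  rintro ⟨j, s⟩ ⟨j', s'⟩ ⟨rfl, hs⟩
  fin_cases s <;> fin_cases s' <;> first | exact absurd rfl hs | exact hadj _ | exact (hadj _).symm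

lemma containsCopy_matching_one {R : SimpleGraph V} {u v : V} (h : R.Adj u v) :
    ContainsCopy R (Matching 1) :=
  containsCopy_matching_of_injective (ι := Fin 1) rfl (fun p => ![u, v] p.2)
    (by
      rintro ⟨j, s⟩ ⟨j', s'⟩ hss
      simp only [Subsingleton.elim j j', Prod.mk.injEq, true_and]
      fin_cases s <;> fin_cases s' <;> simp_all [h.ne, h.ne.symm])
    (fun _ => h)

lemma containsCopy_matching_two_of_rotation {R : SimpleGraph (Fin 4)} (c : Fin 4)
    (h₀ : R.Adj c (c + 1)) (h₂ : R.Adj (c + 2) (c + 3)) : ContainsCopy R (Matching 2) :=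
  containsCopy_matching_of_injective (ι := Fin 2) rfl (fun p => c + ![![0, 1], ![2, 3]] p.1 p.2)
    ((add_right_injective c).comp (by decide))
    (fun j => by fin_cases j <;> simpa)

lemma containsCopy_pathGraph_three {B : SimpleGraph V} {u v w : V} (huv : B.Adj u v)
    (hvw : B.Adj v w) (huw : u ≠ w) : ContainsCopy B (pathGraph 3) := by
  refine ⟨⟨![u, v, w], fun {a b} hab => ?_⟩, fun a b hab => ?_⟩
  · fin_cases a <;> fin_cases b <;> simp_all [pathGraph_adj, B.adj_symm huv, B.adj_symm hvw]
  · fin_cases a <;> fin_cases b <;> simp_all [huv.ne, hvw.ne, huv.ne.symm, hvw.ne.symm, huw.symm]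

lemma adj_or_adj_of_not_containsCopy_pathGraph_three {G R : SimpleGraph V}
    (hB : ¬ContainsCopy (G \ R) (pathGraph 3)) {u v w : V} (huv : G.Adj u v) (hvw : G.Adj v w)
    (huw : u ≠ w) : R.Adj u v ∨ R.Adj v w := by
  by_contra! h
  exact hB (containsCopy_pathGraph_three ⟨huv, h.1⟩ ⟨hvw, h.2⟩ huw)

theorem Arrows.of_le {V₁ V₂ : Type*} {G G' : SimpleGraph V} {G₁ : SimpleGraph V₁}
    {G₂ : SimpleGraph V₂} (h : Arrows G G₁ G₂) (hle : G ≤ G') : Arrows G' G₁ G₂ := by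
  intro R hR
  refine (h (R ⊓ G) inf_le_right).imp (fun hred => hred.map (Hom.ofLE inf_le_left)
    Function.injective_id) (fun hblue => hblue.map (Hom.ofLE ?_) Function.injective_id)
  exact fun _ _ ⟨hG, hR⟩ => ⟨hle hG, fun hR' => hR ⟨hR', hG⟩⟩

theorem Arrows.sum {V₂ : Type*} {G : SimpleGraph V} {H : SimpleGraph W} {B : SimpleGraph V₂}
    {a b : ℕ} (hG : Arrows G (Matching a) B) (hH : Arrows H (Matching b) B) :
    Arrows (G ⊕g H) (Matching (a + b)) B := by
  intro R hR
  obtain ⟨f, hf⟩ | hblue := hG (R.comap Sum.inl) fun _ _ h => by simpa using hR h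
  · obtain ⟨f', hf'⟩ | hblue := hH (R.comap Sum.inr) fun _ _ h => by simpa using hR h
    · refine .inl <| containsCopy_matching_of_injective (ι := Fin a ⊕ Fin b) (by simp)
        (fun | (.inl j, s) => .inl (f (j, s)) | (.inr j, s) => .inr (f' (j, s))) ?_ ?_
      · rintro ⟨j | j, s⟩ ⟨j' | j', s'⟩ h <;> simp only [Sum.inl.injEq, Sum.inr.injEq,
          reduceCtorEq] at h
        · cases hf h; rfl
        · cases hf' h; rfl
      · rintro (j | j)
        exacts [f.map_rel (matching_adj_zero_one j), f'.map_rel (matching_adj_zero_one j)]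
    · exact .inr <| hblue.map ⟨Sum.inr, fun h => ⟨by simpa using h.1, h.2⟩⟩ Sum.inr_injective
  · exact .inr <| hblue.map ⟨Sum.inl, fun h => ⟨by simpa using h.1, h.2⟩⟩ Sum.inl_injective

theorem Arrows.copies {V₂ : Type*} {H : SimpleGraph W} {B : SimpleGraph V₂} {a : ℕ}
    (hH : Arrows H (Matching a) B) (k : ℕ) : Arrows (Copies k H) (Matching (k * a)) B := by
  intro R hR
  by_cases hblue : ∃ i, ContainsCopy (H \ R.comap (Prod.mk i)) B
  · obtain ⟨i, hi⟩ := hblue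
    exact .inr <| hi.map ⟨Prod.mk i, fun h => ⟨⟨rfl, h.1⟩, h.2⟩⟩ (Prod.mk_right_injective i)
  choose f hf using fun i => (hH (R.comap (Prod.mk i)) fun _ _ h => (hR h).2).resolve_right
    (not_exists.1 hblue i)
  refine .inl <| containsCopy_matching_of_injective (ι := Fin k × Fin a) (by simp)
    (fun p => (p.1.1, f p.1.1 (p.1.2, p.2))) ?_
    fun j => (f j.1).map_rel (matching_adj_zero_one j.2)
  rintro ⟨⟨i, j⟩, s⟩ ⟨⟨i', j'⟩, s'⟩ h
  obtain ⟨rfl, h⟩ := Prod.mk.inj h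
  cases hf i h
  rfl

theorem arrows_pathGraph_three_matching_one :
    Arrows (pathGraph 3) (Matching 1) (pathGraph 3) := by
  refine fun R _ => or_iff_not_imp_right.2 fun hB => ?_
  obtain h | h := adj_or_adj_of_not_containsCopy_pathGraph_three hB (u := 0) (v := 1) (w := 2)
    (by simp [pathGraph_adj]) (by simp [pathGraph_adj]) (by decide) <;>
    exact containsCopy_matching_one h

theorem arrows_cycleGraph_four_matching_two :
    Arrows (cycleGraph 4) (Matching 2) (pathGraph 3) := by
  refine fun R _ => or_iff_not_imp_right.2 fun hB => ?_
  have h₀ := adj_or_adj_of_not_containsCopy_pathGraph_three hB (u := 0) (v := 1) (w := 2)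
    (by decide) (by decide) (by decide)
  have h₁ := adj_or_adj_of_not_containsCopy_pathGraph_three hB (u := 1) (v := 2) (w := 3)
    (by decide) (by decide) (by decide)
  have h₂ := adj_or_adj_of_not_containsCopy_pathGraph_three hB (u := 2) (v := 3) (w := 0)
    (by decide) (by decide) (by decide)
  have h₃ := adj_or_adj_of_not_containsCopy_pathGraph_three hB (u := 3) (v := 0) (w := 1)
    (by decide) (by decide) (by decide)
  obtain ⟨h01, h23⟩ | ⟨h12, h30⟩ : (R.Adj 0 1 ∧ R.Adj 2 3) ∨ (R.Adj 1 2 ∧ R.Adj 3 0) := by tauto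
  exacts [containsCopy_matching_two_of_rotation 0 h01 h23,
    containsCopy_matching_two_of_rotation 1 h12 h30]

end

lemma disjUnion_eq_sum {V W : Type*} (G : SimpleGraph V) (H : SimpleGraph W) :
    DisjUnion G H = G ⊕g H := by
  ext (x | x) (y | y) <;> simp [DisjUnion]

namespace SimpleGraph

lemma ncard_edgeSet_sum_sup_edge {V W : Type*} [Finite V] [Finite W] (G : SimpleGraph V)
    (H : SimpleGraph W) (v : V) (w : W) :
    ((G ⊕g H) ⊔ edge (Sum.inl v) (Sum.inr w)).edgeSet.ncard =
      G.edgeSet.ncard + H.edgeSet.ncard + 1 := by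
  rw [edgeSet_sup, edgeSet_edge, (Set.disjoint_singleton_left.2 (by simp)).sdiff_eq_left,
    Set.union_singleton, Set.ncard_insert_of_notMem (by simp), ← Nat.card_coe_set_eq,
    Nat.card_congr edgeSetSumEquiv, Nat.card_sum, Nat.card_coe_set_eq, Nat.card_coe_set_eq]

lemma ncard_edgeSet_pathGraph_three : (pathGraph 3).edgeSet.ncard = 2 := by
  let _ : DecidableRel (pathGraph 3).Adj := fun _ _ => decidable_of_iff _ pathGraph_adj.symm
  rw [← coe_edgeFinset, Set.ncard_coe_finset]
  decide

lemma ncard_edgeSet_cycleGraph_four : (cycleGraph 4).edgeSet.ncard = 4 := by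
  rw [← coe_edgeFinset, Set.ncard_coe_finset]
  decide

end SimpleGraph

theorem exists_connected_arrows_matching_pathGraph_three :
    ∀ n : ℕ, 0 < n → ∃ (V : Type) (G : SimpleGraph V), Finite V ∧ G.Connected ∧
      G.edgeSet.ncard = (5 * n - 1) / 2 ∧ Arrows G (Matching n) (pathGraph 3)
  | 1, _ => ⟨Fin 3, pathGraph 3, inferInstance, pathGraph_connected 2,
      ncard_edgeSet_pathGraph_three, arrows_pathGraph_three_matching_one⟩
  | 2, _ => ⟨Fin 4, cycleGraph 4, inferInstance, cycleGraph_connected,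
      ncard_edgeSet_cycleGraph_four, arrows_cycleGraph_four_matching_two⟩
  | n + 3, _ => by
    obtain ⟨V, G, _, hG, hcard, hArrows⟩ :=
      exists_connected_arrows_matching_pathGraph_three (n + 1) n.succ_pos
    refine ⟨V ⊕ Fin 4, (G ⊕g cycleGraph 4) ⊔ edge (Sum.inl hG.nonempty.some) (Sum.inr 0),
      inferInstance, hG.sum_sup_edge cycleGraph_connected, ?_,
      (hArrows.sum arrows_cycleGraph_four_matching_two).of_le le_sup_left⟩
    rw [ncard_edgeSet_sum_sup_edge, hcard, ncard_edgeSet_cycleGraph_four]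
    omega

/-- For every positive integer `n` there is a connected graph with exactly
`⌊(5n−1)/2⌋` edges arrowing `(nK₂, P₃)`. Concretely: for even `n`, any connected graph obtained
from `n/2` disjoint copies of `C₄` by adding `n/2 − 1` edges (so that it is connected with
`⌊(5n−1)/2⌋` edges in total) has this property; for odd `n`, any connected graph obtained from
`(n−1)/2` disjoint copies of `C₄` together with one copy of `P₃` by adding `(n−1)/2` edges has
this property. -/
theorem connected_graph_arrowing_matching_path3 (n : ℕ) (hn : 0 < n) :
    (∃ (V : Type) (G : SimpleGraph V), Finite V ∧ G.Connected ∧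
        G.edgeSet.ncard = (5 * n - 1) / 2 ∧ Arrows G (Matching n) (pathGraph 3)) ∧
    (Even n → ∀ G : SimpleGraph (Fin (n / 2) × Fin 4),
        Copies (n / 2) (cycleGraph 4) ≤ G → G.Connected →
        G.edgeSet.ncard = (5 * n - 1) / 2 →
        Arrows G (Matching n) (pathGraph 3)) ∧
    (Odd n → ∀ G : SimpleGraph ((Fin ((n - 1) / 2) × Fin 4) ⊕ Fin 3),
        DisjUnion (Copies ((n - 1) / 2) (cycleGraph 4)) (pathGraph 3) ≤ G → G.Connected →
        G.edgeSet.ncard = (5 * n - 1) / 2 →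
        Arrows G (Matching n) (pathGraph 3)) := by
  refine ⟨exists_connected_arrows_matching_pathGraph_three n hn, fun hEven G hle _ _ => ?_,
    fun hOdd G hle _ _ => ?_⟩
  · have hArrows := (arrows_cycleGraph_four_matching_two.copies (n / 2)).of_le hle
    rwa [Nat.div_two_mul_two_of_even hEven] at hArrows
  · rw [disjUnion_eq_sum] at hle
    have hArrows := ((arrows_cycleGraph_four_matching_two.copies ((n - 1) / 2)).sum
      arrows_pathGraph_three_matching_one).of_le hle
    have hn' : (n - 1) / 2 * 2 + 1 = n := by obtain ⟨k, rfl⟩ := hOdd; omega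
    rwa [hn'] at hArrows
end

section
/- For every positive integer n there exists a connected graph H with exactly 4n−1 edges such that H → (nK₂, C₃); concretely, any connected graph obtained from n disjoint triangles by adding n−1 edges has this property. -/
/-!
In a red/blue colouring of a graph containing `n` disjoint triangles, either some triangle has
no red edge, and is a blue `C₃`, or every triangle has a red edge, and these `n` edges form a red
`nK₂`. Joining `n` disjoint triangles by `n − 1` edges from one vertex gives a connected such
graph with `3n + (n − 1) = 4n − 1` edges.
-/

open SimpleGraph

lemma containsCopy_of_le {V : Type*} {G H : SimpleGraph V} (h : G ≤ H) : ContainsCopy H G :=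
  ⟨⟨id, fun hab => h hab⟩, Function.injective_id⟩

lemma containsCopy_matching {V : Type*} {n : ℕ} {R : SimpleGraph V} (e : Fin n → Fin 2 → V)
    (he : ∀ i, R.Adj (e i 0) (e i 1)) (he_inj : Function.Injective (Function.uncurry e)) :
    ContainsCopy R (Matching n) := by
  refine ⟨⟨Function.uncurry e, ?_⟩, he_inj⟩
  rintro ⟨i, j⟩ ⟨i', j'⟩ ⟨rfl, hj⟩
  fin_cases j <;> fin_cases j' <;> simp_all [(he _).symm]

theorem arrows_matching_of_containsCopy {V W : Type*} {n : ℕ} {H : SimpleGraph V}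
    {K : SimpleGraph W} (hK : ContainsCopy H (Copies n K)) : Arrows H (Matching n) K := by
  obtain ⟨f, hf⟩ := hK
  intro R _
  by_cases hred : ∀ i, ∃ a b, K.Adj a b ∧ R.Adj (f (i, a)) (f (i, b))
  · choose a b hab hred using hred
    left
    refine containsCopy_matching (fun i => f ∘ (i, ·) ∘ ![a i, b i]) hred ?_
    rintro ⟨i, j⟩ ⟨i', j'⟩ h
    obtain ⟨rfl, hj⟩ := Prod.ext_iff.mp (hf h)
    fin_cases j <;> fin_cases j' <;> simp_all [(hab i).ne, (hab i).ne']
  · obtain ⟨i, hblue⟩ := not_forall.mp hred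
    right
    exact ⟨⟨fun v => f (i, v), fun hab => ⟨f.map_rel ⟨rfl, hab⟩, fun h => hblue ⟨_, _, hab, h⟩⟩⟩,
      fun _ _ h => (Prod.ext_iff.mp (hf h)).2⟩

-- Indexing the edges injectively makes their number, `3 (m + 1) + m`, the size of the index type.
def triangleStarEdge (m : ℕ) : (Fin (m + 1) × Fin 3) ⊕ Fin m → Sym2 (Fin (m + 1) × Fin 3)
  | .inl (i, k) => s((i, k), (i, k + 1))
  | .inr j => s((0, 0), (j.succ, 0))

def triangleStar (m : ℕ) : SimpleGraph (Fin (m + 1) × Fin 3) :=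
  fromEdgeSet (Set.range (triangleStarEdge m))

lemma triangleStarEdge_injective (m : ℕ) : Function.Injective (triangleStarEdge m) := by
  have hside_inj : ∀ k k' : Fin 3, s(k, k + 1) = s(k', k' + 1) → k = k' := by decide
  have hside_ne : ∀ k : Fin 3, s(k, k + 1) ≠ s(0, 0) := by decide
  rintro (⟨i, k⟩ | j) (⟨i', k'⟩ | j') h <;> have hfst := congrArg (Sym2.map Prod.fst) h <;>
    have hsnd := congrArg (Sym2.map Prod.snd) h <;>
    simp only [triangleStarEdge, Sym2.map_mk] at hfst hsnd
  · rw [Sym2.eq_iff] at hfst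
    simp [hside_inj k k' hsnd, hfst.elim And.left And.left]
  · exact absurd hsnd (hside_ne k)
  · exact absurd hsnd.symm (hside_ne k')
  · simpa using Sym2.congr_right.mp hfst

lemma triangleStarEdge_not_isDiag (m : ℕ) : ∀ x, ¬ (triangleStarEdge m x).IsDiag := by
  rintro (⟨i, k⟩ | j) hd <;> rw [triangleStarEdge, Sym2.mk_isDiag_iff] at hd
  · exact (show ∀ k : Fin 3, k ≠ k + 1 by decide) k (congrArg Prod.snd hd)
  · exact (Fin.succ_ne_zero j) (congrArg Prod.fst hd).symm

lemma copies_le_triangleStar (m : ℕ) : Copies (m + 1) (cycleGraph 3) ≤ triangleStar m := by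
  have hcycle : ∀ a b : Fin 3, (cycleGraph 3).Adj a b → ∃ k, s(a, b) = s(k, k + 1) := by decide
  rintro ⟨i, a⟩ ⟨i', b⟩ ⟨rfl, hab⟩
  obtain ⟨k, hk⟩ := hcycle a b hab
  refine (fromEdgeSet_adj _).mpr ⟨⟨.inl (i, k), ?_⟩, by simp [hab.ne]⟩
  exact (congrArg (Sym2.map (i, ·)) hk).symm

lemma triangleStar_connected (m : ℕ) : (triangleStar m).Connected := by
  have hcycle : ∀ a : Fin 3, a ≠ 0 → (cycleGraph 3).Adj a 0 := by decide
  have hroot : ∀ v, (triangleStar m).Reachable (0, 0) v := by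
    rintro ⟨i, a⟩
    have hspoke : (triangleStar m).Reachable (0, 0) (i, 0) := by
      obtain rfl | ⟨j, rfl⟩ := Fin.eq_zero_or_eq_succ i
      · rfl
      · refine Adj.reachable <| (fromEdgeSet_adj _).mpr ⟨⟨.inr j, rfl⟩, ?_⟩
        simp [Prod.ext_iff, (Fin.succ_ne_zero j).symm]
    have htriangle : (triangleStar m).Reachable (i, a) (i, 0) := by
      by_cases ha : a = 0
      · rw [ha]
      · exact (copies_le_triangleStar m (show (Copies _ _).Adj (i, a) (i, 0) from
          ⟨rfl, hcycle a ha⟩)).reachable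
    exact hspoke.trans htriangle.symm
  exact ⟨fun u v => (hroot u).symm.trans (hroot v)⟩

lemma triangleStar_edgeSet_ncard (m : ℕ) :
    (triangleStar m).edgeSet.ncard = 4 * (m + 1) - 1 := by
  have hrange : Set.range (triangleStarEdge m) \ Sym2.diagSet = Set.range (triangleStarEdge m) :=
    sdiff_eq_left.mpr <| Set.disjoint_left.mpr fun _ ⟨x, hx⟩ =>
      hx ▸ triangleStarEdge_not_isDiag m x
  rw [triangleStar, edgeSet_fromEdgeSet, hrange,
    Set.ncard_range_of_injective (triangleStarEdge_injective m)]
  simp only [Nat.card_eq_fintype_card, Fintype.card_sum, Fintype.card_prod, Fintype.card_fin]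
  omega

/-- For every positive integer `n` there is a connected graph with exactly
`4n−1` edges arrowing `(nK₂, C₃)`; concretely, any connected graph obtained from `n` disjoint
triangles by adding `n−1` edges (so that it is connected with `4n−1` edges in total) has this
property. -/
theorem connected_graph_arrowing_matching_triangle (n : ℕ) (hn : 0 < n) :
    (∃ (V : Type) (H : SimpleGraph V), Finite V ∧ H.Connected ∧
        H.edgeSet.ncard = 4 * n - 1 ∧ Arrows H (Matching n) (cycleGraph 3)) ∧
    (∀ H : SimpleGraph (Fin n × Fin 3),
        Copies n (cycleGraph 3) ≤ H → H.Connected → H.edgeSet.ncard = 4 * n - 1 →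
        Arrows H (Matching n) (cycleGraph 3)) := by
  refine ⟨?_, fun H hle _ _ => arrows_matching_of_containsCopy (containsCopy_of_le hle)⟩
  obtain ⟨m, rfl⟩ := Nat.exists_eq_add_one_of_ne_zero hn.ne'
  exact ⟨_, triangleStar m, inferInstance, triangleStar_connected m, triangleStar_edgeSet_ncard m,
    arrows_matching_of_containsCopy (containsCopy_of_le (copies_le_triangleStar m))⟩
end

section
/- Let n be a positive integer and let G be a connected graph with at most ⌊(5n−3)/2⌋ edges such that G → (nK₂, P₃), and suppose that for every positive integer k < n, every connected graph with at most ⌊(5k−3)/2⌋ edges does not arrow (kK₂, P₃). Then every non-cut vertex of G (a vertex whose deletion leaves a connected graph) has degree at most two in G. -/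
/-! If a non-cut vertex `v` had degree at least three, then `n ≥ 2` and `G - v` would be a connected
graph with at least three edges fewer than `G`, hence with at most `⌊(5(n-1)-3)/2⌋` edges. Every
colouring of `G - v` extends to `G` by colouring the edges at `v` red, and a red `nK₂` or blue `P₃`
in `G` yields a red `(n-1)K₂` or blue `P₃` in `G - v`; so `G - v → ((n-1)K₂, P₃)`, against the
minimality assumption. -/

open SimpleGraph

section

variable {V W : Type*}

theorem ContainsCopy.mono {G G' : SimpleGraph V} {H : SimpleGraph W} (h : ContainsCopy G H)
    (hle : G ≤ G') : ContainsCopy G' H :=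
  let ⟨f, hf⟩ := h
  ⟨(Hom.ofLE hle).comp f, hf⟩

theorem containsCopy_induce_of_forall_mem {G : SimpleGraph V} {H : SimpleGraph W} {s : Set V}
    (f : H →g G) (hf : Function.Injective f) (hs : ∀ x, f x ∈ s) :
    ContainsCopy (G.induce s) H :=
  ⟨⟨fun x => ⟨f x, hs x⟩, fun hxy => f.map_rel hxy⟩,
    fun _ _ hxy => hf (congrArg Subtype.val hxy)⟩

theorem ContainsCopy.matching_induce_ne {G : SimpleGraph V} {n : ℕ}
    (h : ContainsCopy G (Matching (n + 1))) (v : V) :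
    ContainsCopy (G.induce {w | w ≠ v}) (Matching n) := by
  obtain ⟨f, hf⟩ := h
  obtain ⟨i₀, hi₀⟩ : ∃ i₀, ∀ p, f p = v → p.1 = i₀ := by
    by_cases hv : ∃ p, f p = v
    · obtain ⟨p, hp⟩ := hv
      exact ⟨p.1, fun q hq => congrArg Prod.fst (hf (hq.trans hp.symm))⟩
    · exact ⟨0, fun p hp => absurd ⟨p, hp⟩ hv⟩
  let g : Matching n →g Matching (n + 1) :=
    ⟨Prod.map i₀.succAbove id, fun ⟨hfst, hsnd⟩ => ⟨congrArg i₀.succAbove hfst, hsnd⟩⟩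
  have hg : Function.Injective g :=
    Fin.succAbove_right_injective.prodMap Function.injective_id
  exact containsCopy_induce_of_forall_mem (f.comp g) (hf.comp hg)
    fun p hp => Fin.succAbove_ne i₀ p.1 (hi₀ _ hp)

/-- A red `(n+1)K₂` loses at most one edge when `v` is deleted, and a blue copy of a graph without
isolated vertices cannot meet `v`, all of whose edges are red. -/
theorem Arrows.induce_ne {G : SimpleGraph V} {H : SimpleGraph W} {n : ℕ}
    (h : Arrows G (Matching (n + 1)) H) (hH : ∀ x, ∃ y, H.Adj x y) (v : V) :
    Arrows (G.induce {w | w ≠ v}) (Matching n) H := by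
  intro R' hR'
  let S : Set V := {w | w ≠ v}
  let B := (G.induce S \ R').map (Function.Embedding.subtype (· ∈ S))
  rcases h (G \ B) sdiff_le with hred | ⟨f, hf⟩
  · refine Or.inl ((hred.matching_induce_ne v).mono fun a b hab => ?_)
    by_contra hR
    exact hab.2 ⟨hab.1.ne, a, b, ⟨hab.1, hR⟩, rfl, rfl⟩
  · have hblue : G \ (G \ B) ≤ B := by
      rw [sdiff_sdiff_right_self]
      exact inf_le_right
    have hmem : ∀ x, f x ∈ S := fun x => by
      obtain ⟨y, hxy⟩ := hH x
      obtain ⟨-, a, _, -, ha, -⟩ := hblue (f.map_rel hxy)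
      exact ha ▸ a.2
    refine Or.inr ((containsCopy_induce_of_forall_mem f hf hmem).mono ?_)
    calc (G \ (G \ B)).induce S ≤ B.induce S := comap_monotone _ hblue
      _ = G.induce S \ R' := comap_map_eq _ _

theorem SimpleGraph.ncard_edgeSet_induce_ne_add_ncard_neighborSet [Finite V] (G : SimpleGraph V)
    (v : V) :
    (G.induce {w | w ≠ v}).edgeSet.ncard + (G.neighborSet v).ncard = G.edgeSet.ncard := by
  classical
  cases nonempty_fintype V
  have hinduce := G.card_edgeFinset_induce_compl_singleton v
  rw [card_edgeFinset_deleteIncidenceSet] at hinduce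
  rw [← coe_edgeFinset, ← coe_edgeFinset, ← coe_neighborFinset, Set.ncard_coe_finset,
    Set.ncard_coe_finset, Set.ncard_coe_finset, card_neighborFinset_eq_degree]
  exact (congrArg (· + G.degree v) hinduce).trans
    (Nat.sub_add_cancel (G.degree_le_card_edgeFinset v))

end

theorem noncut_vertex_degree_le_two_general (n : ℕ) (V : Type) [Finite V]
    (G : SimpleGraph V) (hE : G.edgeSet.ncard ≤ (5 * n - 3) / 2)
    (harrow : Arrows G (Matching n) (pathGraph 3))
    (hmin : ∀ k : ℕ, 0 < k → k < n → ∀ (W : Type), Finite W → ∀ H : SimpleGraph W,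
      H.Connected → H.edgeSet.ncard ≤ (5 * k - 3) / 2 →
      ¬ Arrows H (Matching k) (pathGraph 3)) :
    ∀ v : V, (G.induce {w | w ≠ v}).Connected → (G.neighborSet v).ncard ≤ 2 := by
  intro v hv
  by_contra! hdeg
  have hcount := G.ncard_edgeSet_induce_ne_add_ncard_neighborSet v
  obtain ⟨m, rfl⟩ : ∃ m, n = m + 1 := ⟨n - 1, by omega⟩
  exact hmin m (by omega) (by omega) _ inferInstance _ hv (by omega)
    (harrow.induce_ne (pathGraph_preconnected 3).exists_adj_of_nontrivial v)

/-- If `G` is a connected graph with at most `⌊(5n−3)/2⌋` edges arrowing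
`(nK₂, P₃)`, and for every positive `k < n` every connected graph with at most `⌊(5k−3)/2⌋`
edges does not arrow `(kK₂, P₃)`, then every non-cut vertex of `G` has degree at most two. -/
theorem noncut_vertex_degree_le_two (n : ℕ) (hn : 0 < n) (V : Type) [Finite V]
    (G : SimpleGraph V) (hconn : G.Connected) (hE : G.edgeSet.ncard ≤ (5 * n - 3) / 2)
    (harrow : Arrows G (Matching n) (pathGraph 3))
    (hmin : ∀ k : ℕ, 0 < k → k < n → ∀ (W : Type), Finite W → ∀ H : SimpleGraph W,
      H.Connected → H.edgeSet.ncard ≤ (5 * k - 3) / 2 →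
      ¬ Arrows H (Matching k) (pathGraph 3)) :
    ∀ v : V, (G.induce {w | w ≠ v}).Connected → (G.neighborSet v).ncard ≤ 2 :=
  noncut_vertex_degree_le_two_general n V G hE harrow hmin
end
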